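/- arXiv:math/0504296 — 3 statements merged into one kernel-verified Lean document; each statement's English description precedes it below -/
import Mathlib

section
/- If (C,Δ) is a nonassociative permutative coalgebra, then for each k ≥ 1 the image of the iterated coproduct Δᵏ: C → C^{⊗(k+1)} lies in the invariants of C^{⊗(k+1)} under the subgroup Σ₁ × Σ_k of Σ_{k+1} permuting the last k tensor factors. -/
open TensorProduct

variable (K : Type) [Field K] (H : Type) [AddCommGroup H] [Module K H]

/-- The iterated tensor power `H^{⊗(n+1)}`, left-nested. -/
noncomputable def TPc : ℕ → ModuleCat.{0} K
  | 0 => ModuleCat.of K H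
  | n + 1 => ModuleCat.of K (TensorProduct K (TPc n) H)

abbrev TP (n : ℕ) : Type := (TPc K H n : Type)

variable (Δ : H →ₗ[K] TensorProduct K H H)

/-- Apply `Δ` to the first tensor factor: `Δ ⊗ Id^{⊗n}`. -/
noncomputable def expDelta : ∀ n, TP K H n →ₗ[K] TP K H (n + 1)
  | 0 => Δ
  | n + 1 => LinearMap.rTensor H (expDelta n)

/-- The iterated coproduct `Δⁿ : H → H^{⊗(n+1)}`, `Δ⁰ = Id`,
`Δ^{n+1} = (Δ ⊗ Id^{⊗n})Δⁿ`. -/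
noncomputable def DIter : ∀ n, H →ₗ[K] TP K H n
  | 0 => LinearMap.id
  | n + 1 => expDelta K H Δ n ∘ₗ DIter n

/-- Swap the last two tensor factors of `H^{⊗(n+3)}`. -/
noncomputable def swapLastTwo (n : ℕ) : TP K H (n + 2) →ₗ[K] TP K H (n + 2) :=
  (TensorProduct.assoc K (TP K H n) H H).symm.toLinearMap ∘ₗ
    LinearMap.lTensor (TP K H n) (TensorProduct.comm K H H).toLinearMap ∘ₗ
      (TensorProduct.assoc K (TP K H n) H H).toLinearMap

/-- The linear map on `H^{⊗(n+1)}` permuting the tensor factors in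
positions `i` and `i+1` (positions numbered `0,…,n`). -/
noncomputable def swapAdj : ∀ (n i : ℕ), TP K H n →ₗ[K] TP K H n
  | 0, _ => LinearMap.id
  | 1, 0 => (TensorProduct.comm K H H).toLinearMap
  | 1, _ + 1 => LinearMap.id
  | n + 2, i =>
    if i = n + 1 then swapLastTwo K H n
    else LinearMap.rTensor H (swapAdj (n + 1) i)

/-- Derivation (right-module) action of `y ∈ H` on `H^{⊗(n+1)}`:
`(x₁⊗…⊗xₘ)∘y = Σᵢ x₁⊗…⊗xᵢ∘y⊗…⊗xₘ`. -/
noncomputable def mOp (μ : H →ₗ[K] H →ₗ[K] H) (y : H) :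
    ∀ n, TP K H n →ₗ[K] TP K H n
  | 0 => μ.flip y
  | n + 1 =>
    LinearMap.rTensor H (mOp μ y n) + LinearMap.lTensor (TP K H n) (μ.flip y)

/-- Insertion operator `δ_y : H^{⊗(n+1)} → H^{⊗(n+2)}`,
`δ_y(x₁⊗…⊗xₘ) = Σᵢ x₁⊗…⊗xᵢ⊗y⊗xᵢ₊₁⊗…⊗xₘ` (inserting `y` after each factor). -/
noncomputable def dOp (y : H) : ∀ n, TP K H n →ₗ[K] TP K H (n + 1)
  | 0 => (TensorProduct.mk K H H).flip y
  | n + 1 =>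
    (show TP K H (n + 1) →ₗ[K] TP K H (n + 2) from
      LinearMap.rTensor H (dOp y n)) +
      (show TP K H (n + 1) →ₗ[K] TP K H (n + 2) from
        (TensorProduct.mk K (TP K H (n + 1)) H).flip y)

/-- Canonical splitting `H^{⊗(m+n+2)} ≅ H^{⊗(m+1)} ⊗ H^{⊗(n+1)}`. -/
noncomputable def splitE : ∀ (m n : ℕ),
    TP K H (m + n + 1) ≃ₗ[K] TensorProduct K (TP K H m) (TP K H n)
  | m, 0 => LinearEquiv.refl K (TP K H (m + 1))
  | m, n + 1 =>
    (TensorProduct.congr (splitE m n) (LinearEquiv.refl K H)).trans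
      (TensorProduct.assoc K (TP K H m) (TP K H n) H)

/-- Cast along an equality of indices. -/
noncomputable def tcast {m n : ℕ} (h : m = n) : TP K H m ≃ₗ[K] TP K H n := by
  subst h; exact LinearEquiv.refl K (TP K H m)

/-- The operators `A_{k+1} : H^{⊗(k+1)} → H` of Livernet: `A₁ = Id`, `A₂ = μ`,
`A_{k+1} = Σ_{l=1}^{k} C(k−1,l−1) μ(A_l ⊗ A_{k+1−l})`; here `Aop k = A_{k+1}`. -/
noncomputable def Aop (μ : H →ₗ[K] H →ₗ[K] H) : ∀ k, TP K H k →ₗ[K] H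
  | 0 => LinearMap.id
  | k + 1 =>
    ∑ j ∈ (Finset.range (k + 1)).attach,
      (Nat.choose k j.1 : K) •
        (TensorProduct.lift μ ∘ₗ
          TensorProduct.map (Aop μ j.1) (Aop μ (k - j.1)) ∘ₗ
            (splitE K H j.1 (k - j.1)).toLinearMap ∘ₗ
              (tcast K H (show k + 1 = j.1 + (k - j.1) + 1 by
                have := Finset.mem_range.mp j.2; omega)).toLinearMap)
  termination_by k => k
  decreasing_by
  · have := Finset.mem_range.mp j.2; omega
  · have := Finset.mem_range.mp j.2; omega

section Cfil
variable {K} (M : Type) [AddCommGroup M] [Module K M]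

/-- The subspace `p ⊗ q` of `M ⊗ M` spanned by tensors of elements of the
submodules `p` and `q`. -/
noncomputable def tensSub (p q : Submodule K M) :
    Submodule K (TensorProduct K M M) :=
  LinearMap.range (TensorProduct.map p.subtype q.subtype)

/-- The coradical-type filtration of `(C,Δ)`:
`C₁ = ker Δ`, `Cₙ = {x | Δ(x) ∈ Σ_{i=1}^{n−1} C_i ⊗ C_{n−i}}` (and `C₀ = 0`). -/
noncomputable def Cfil (D : M →ₗ[K] TensorProduct K M M) : ℕ → Submodule K M
  | 0 => ⊥
  | n + 1 =>
    Submodule.comap D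
      (∑ j ∈ (Finset.range n).attach,
        tensSub M (Cfil D (j.1 + 1)) (Cfil D (n - j.1)))
  termination_by n => n
  decreasing_by
  · have := Finset.mem_range.mp j.2; omega
  · have := Finset.mem_range.mp j.2; omega

end Cfil

/-- Multiply the last tensor factor of `H^{⊗(p+1)}` by an element of `H`. -/
noncomputable def mulLast (μ : H →ₗ[K] H →ₗ[K] H) :
    ∀ p, TensorProduct K (TP K H p) H →ₗ[K] TP K H p
  | 0 => TensorProduct.lift μ
  | p + 1 =>
    LinearMap.lTensor (TP K H p) (TensorProduct.lift μ) ∘ₗ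
      (TensorProduct.assoc K (TP K H p) H H).toLinearMap

/-- `join p q : H^{⊗(p+1)} ⊗ H^{⊗(q+1)} → H^{⊗(p+q+1)}` multiplies the last
factor of the first block with the first factor of the second block. -/
noncomputable def joinMul (μ : H →ₗ[K] H →ₗ[K] H) :
    ∀ p q, TensorProduct K (TP K H p) (TP K H q) →ₗ[K] TP K H (p + q)
  | p, 0 => mulLast K H μ p
  | p, q + 1 =>
    (show TensorProduct K (TP K H p) (TP K H (q + 1)) →ₗ[K] TP K H (p + (q + 1))
      from LinearMap.rTensor H (joinMul μ p q) ∘ₗ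
        (TensorProduct.assoc K (TP K H p) (TP K H q) H).symm.toLinearMap)

variable (μ : H →ₗ[K] H →ₗ[K] H)

/-!
Invariance under each adjacent transposition `(i, i+1)`, `1 ≤ i < k`, goes by induction on `k`.
Since `Δᵏ⁺¹ = (Δᵏ ⊗ Id)Δ`, a transposition not touching the last factor reduces to the same one for
`Δᵏ`. For the transposition of the last two factors use `Δᵏ⁺¹ = (Δ ⊗ Id^{⊗k})Δᵏ` instead: for
`k ≥ 2` the map `Δ ⊗ Id^{⊗k}` leaves the last two factors alone and so commutes with swapping
them, which brings us down to `k = 2`, where invariance is the permutative relation itself.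
-/

lemma DIter_succ (k : ℕ) : DIter K H Δ (k + 1) = expDelta K H Δ k ∘ₗ DIter K H Δ k := rfl

lemma DIter_succ_eq_rTensor_comp :
    ∀ k, DIter K H Δ (k + 1) = LinearMap.rTensor H (DIter K H Δ k) ∘ₗ Δ
  | 0 => LinearMap.ext fun x => (LinearMap.rTensor_id_apply H H (Δ x)).symm
  | k + 1 => by
    rw [DIter_succ]
    conv_lhs => rw [DIter_succ_eq_rTensor_comp k]
    exact LinearMap.ext fun x =>
      (LinearMap.rTensor_comp_apply H (expDelta K H Δ k) (DIter K H Δ k) (Δ x)).symm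

lemma swapAdj_succ_succ_self (n : ℕ) :
    swapAdj K H (n + 2) (n + 1) = swapLastTwo K H n := by
  simp [swapAdj]

lemma swapAdj_succ_succ_of_ne {n i : ℕ} (h : i ≠ n + 1) :
    swapAdj K H (n + 2) i = LinearMap.rTensor H (swapAdj K H (n + 1) i) := by
  simp only [swapAdj, h, ↓reduceIte]
  rfl

lemma swapLastTwo_comp_expDelta (n : ℕ) :
    swapLastTwo K H (n + 1) ∘ₗ expDelta K H Δ (n + 2)
      = expDelta K H Δ (n + 2) ∘ₗ swapLastTwo K H n := by
  apply TensorProduct.ext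
  apply TensorProduct.ext
  ext x y z
  rfl

lemma swapAdj_last_comp_DIter
    (hnap : swapAdj K H 2 1 ∘ₗ DIter K H Δ 2 = DIter K H Δ 2) :
    ∀ n, swapAdj K H (n + 2) (n + 1) ∘ₗ DIter K H Δ (n + 2) = DIter K H Δ (n + 2)
  | 0 => hnap
  | n + 1 => by
    have ih := swapAdj_last_comp_DIter hnap n
    rw [swapAdj_succ_succ_self] at ih ⊢
    rw [DIter_succ, ← LinearMap.comp_assoc, swapLastTwo_comp_expDelta, LinearMap.comp_assoc, ih]

lemma swapAdj_comp_DIter_succ_succ {k i : ℕ} (hi : i ≠ k + 1) :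
    swapAdj K H (k + 2) i ∘ₗ DIter K H Δ (k + 2)
      = LinearMap.rTensor H (swapAdj K H (k + 1) i ∘ₗ DIter K H Δ (k + 1)) ∘ₗ Δ := by
  rw [swapAdj_succ_succ_of_ne K H hi, DIter_succ_eq_rTensor_comp, LinearMap.rTensor_comp,
    LinearMap.comp_assoc]
  rfl

/-- Invariance under `Σ₁ × Σ_k` is expressed by invariance under its generating adjacent
transpositions `(i, i+1)`, `1 ≤ i ≤ k−1`, acting as `swapAdj k i`. -/
theorem nap_coalgebra_DIter_invariant
    (hnap : swapAdj K H 2 1 ∘ₗ DIter K H Δ 2 = DIter K H Δ 2) :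
    ∀ k i : ℕ, 1 ≤ i → i < k →
      swapAdj K H k i ∘ₗ DIter K H Δ k = DIter K H Δ k := by
  intro k
  induction k with
  | zero => intro i _ hik; omega
  | succ k ih =>
    intro i hi hik
    obtain hik | rfl : i < k ∨ i = k := by omega
    · obtain ⟨k, rfl⟩ : ∃ n, k = n + 1 := ⟨k - 1, by omega⟩
      rw [swapAdj_comp_DIter_succ_succ K H Δ hik.ne, ih i hi hik]
      exact (DIter_succ_eq_rTensor_comp K H Δ (k + 1)).symm
    · obtain ⟨n, rfl⟩ : ∃ n, i = n + 1 := ⟨i - 1, by omega⟩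
      exact swapAdj_last_comp_DIter K H Δ hnap n
end

section
/- Let H be a vector space with a pre-Lie product ∘ and a coproduct Δ satisfying the distributive law Δ(x∘y) = x⊗y + Δ(x)∘y, where H^{⊗2} is a right H-module by derivations. Then for every k ≥ 1, Δᵏ(x∘y) = Δᵏ(x)∘y + δ_y(Δ^{k−1}(x)), where δ_y: H^{⊗k} → H^{⊗(k+1)} inserts y in all positions after the first: δ_y(x₁⊗…⊗x_k) = Σ_{i=1}^{k} x₁⊗…⊗x_i⊗y⊗x_{i+1}⊗…⊗x_k. -/
open TensorProduct

variable (K : Type) [Field K] (H : Type) [AddCommGroup H] [Module K H]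

variable (Δ : H →ₗ[K] TensorProduct K H H)

variable (μ : H →ₗ[K] H →ₗ[K] H)

/-!
Write `Δₙ = Δ ⊗ Id^{⊗n}` and `ι_y = insertSecond y` for the insertion of `y` as second
tensor factor, so that `Δ^{k+1} = Δₖ Δᵏ`. The distributive law says `Δ₀(x∘y) = Δ₀(x)∘y + ι_y(x)`, and it propagates to
`Δₙ(t∘y) = Δₙ(t)∘y + ι_y(t)`. On the other side `δ_y Δₙ = Δₙ₊₁ δ_y + ι_y Δₙ`: inserting `y`
after each factor of `Δ(x₁) ⊗ x₂ ⊗ ⋯` is inserting it after each `xᵢ` and then applying `Δ`,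
plus the one insertion between the two factors of `Δ(x₁)`. So when `Δₖ` is applied to the
identity at level `k`, the same extra term `ι_y Δᵏ(x)` appears on both sides, and induction on
`k` goes through.
-/

noncomputable def insertSecond (y : H) : ∀ n, TP K H n →ₗ[K] TP K H (n + 1)
  | 0 => (TensorProduct.mk K H H).flip y
  | n + 1 => LinearMap.rTensor H (insertSecond y n)

variable {K H Δ μ}

lemma expDelta_comp_mOp {y : H}
    (hdlaw : ∀ x : H,
      Δ (μ x y) = x ⊗ₜ[K] y + LinearMap.rTensor H (μ.flip y) (Δ x)
        + LinearMap.lTensor H (μ.flip y) (Δ x)) :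
    ∀ n, expDelta K H Δ n ∘ₗ mOp K H μ y n
      = mOp K H μ y (n + 1) ∘ₗ expDelta K H Δ n + insertSecond K H y n
  | 0 => by
    ext x
    change Δ (μ x y) = (LinearMap.rTensor H (μ.flip y) (Δ x)
      + LinearMap.lTensor H (μ.flip y) (Δ x)) + (x ⊗ₜ[K] y : H ⊗[K] H)
    rw [hdlaw x]
    abel
  | n + 1 => by
    change LinearMap.rTensor H (expDelta K H Δ n) ∘ₗ
        (LinearMap.rTensor H (mOp K H μ y n) + LinearMap.lTensor (TP K H n) (μ.flip y))
      = (LinearMap.rTensor H (mOp K H μ y (n + 1))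
          + LinearMap.lTensor (TP K H (n + 1)) (μ.flip y)) ∘ₗ
          LinearMap.rTensor H (expDelta K H Δ n) + LinearMap.rTensor H (insertSecond K H y n)
    rw [LinearMap.comp_add, LinearMap.add_comp, ← LinearMap.rTensor_comp,
      expDelta_comp_mOp hdlaw n, LinearMap.rTensor_add, LinearMap.rTensor_comp,
      LinearMap.rTensor_comp_lTensor, LinearMap.lTensor_comp_rTensor]
    abel

lemma dOp_comp_expDelta (y : H) :
    ∀ n, dOp K H y (n + 1) ∘ₗ expDelta K H Δ n
      = expDelta K H Δ (n + 1) ∘ₗ dOp K H y n + insertSecond K H y (n + 1) ∘ₗ expDelta K H Δ n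
  | 0 => by
    ext x
    exact add_comm _ _
  | n + 1 => by
    refine LinearMap.ext fun (z : TP K H n ⊗[K] H) => ?_
    have ih := LinearMap.congr_fun (congrArg (LinearMap.rTensor H) (dOp_comp_expDelta y n)) z
    simp only [LinearMap.rTensor_add, LinearMap.rTensor_comp, LinearMap.add_apply,
      LinearMap.comp_apply] at ih
    change LinearMap.rTensor H (dOp K H y (n + 1)) (LinearMap.rTensor H (expDelta K H Δ n) z)
        + TensorProduct.mk K (TP K H (n + 2)) H (expDelta K H Δ (n + 1) z) y
      = LinearMap.rTensor H (expDelta K H Δ (n + 1))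
          (LinearMap.rTensor H (dOp K H y n) z + TensorProduct.mk K (TP K H (n + 1)) H z y)
        + LinearMap.rTensor H (insertSecond K H y (n + 1))
          (LinearMap.rTensor H (expDelta K H Δ n) z)
    rw [ih, map_add]
    exact add_right_comm _ _ _

lemma DIter_comp_mul_flip {y : H}
    (hdlaw : ∀ x : H,
      Δ (μ x y) = x ⊗ₜ[K] y + LinearMap.rTensor H (μ.flip y) (Δ x)
        + LinearMap.lTensor H (μ.flip y) (Δ x)) :
    ∀ m, DIter K H Δ (m + 1) ∘ₗ μ.flip y
      = mOp K H μ y (m + 1) ∘ₗ DIter K H Δ (m + 1) + dOp K H y m ∘ₗ DIter K H Δ m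
  | 0 => expDelta_comp_mOp hdlaw 0
  | m + 1 => by
    change expDelta K H Δ (m + 1) ∘ₗ (DIter K H Δ (m + 1) ∘ₗ μ.flip y)
      = mOp K H μ y (m + 2) ∘ₗ expDelta K H Δ (m + 1) ∘ₗ DIter K H Δ (m + 1)
        + dOp K H y (m + 1) ∘ₗ expDelta K H Δ m ∘ₗ DIter K H Δ m
    rw [DIter_comp_mul_flip hdlaw m, LinearMap.comp_add, ← LinearMap.comp_assoc,
      expDelta_comp_mOp hdlaw, ← LinearMap.comp_assoc, ← LinearMap.comp_assoc,
      ← LinearMap.comp_assoc, dOp_comp_expDelta]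
    simp only [LinearMap.add_comp, LinearMap.comp_assoc]
    exact (add_assoc _ _ _).trans (congrArg₂ (· + ·) rfl (add_comm _ _))

theorem DIter_of_mul_general
    (hdlaw : ∀ x y : H,
      Δ (μ x y) = x ⊗ₜ[K] y + LinearMap.rTensor H (μ.flip y) (Δ x)
        + LinearMap.lTensor H (μ.flip y) (Δ x)) :
    ∀ (m : ℕ) (x y : H),
      DIter K H Δ (m + 1) (μ x y) =
        mOp K H μ y (m + 1) (DIter K H Δ (m + 1) x)
          + dOp K H y m (DIter K H Δ m x) := by
  intro m x y
  exact LinearMap.congr_fun (DIter_comp_mul_flip (hdlaw · y) m) x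

/-- Let `H` be a pre-Lie algebra with a nonassociative
permutative coproduct `Δ` satisfying the distributive law
`Δ(x∘y) = x⊗y + Δ(x)∘y` (where `H^{⊗2}` is a right `H`-module by
derivations).  Then for every `k ≥ 1` (written `k = m+1`),
`Δᵏ(x∘y) = Δᵏ(x)∘y + δ_y(Δ^{k−1}(x))`, where `δ_y` inserts `y` in all
positions after the first. -/
theorem DIter_of_mul
    (hpre : ∀ a b c : H,
      μ (μ a b) c - μ a (μ b c) = μ (μ a c) b - μ a (μ c b))
    (hnap : swapAdj K H 2 1 ∘ₗ DIter K H Δ 2 = DIter K H Δ 2)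
    (hdlaw : ∀ x y : H,
      Δ (μ x y) = x ⊗ₜ[K] y + LinearMap.rTensor H (μ.flip y) (Δ x)
        + LinearMap.lTensor H (μ.flip y) (Δ x)) :
    ∀ (m : ℕ) (x y : H),
      DIter K H Δ (m + 1) (μ x y) =
        mOp K H μ y (m + 1) (DIter K H Δ (m + 1) x)
          + dOp K H y m (DIter K H Δ m x) :=
  DIter_of_mul_general hdlaw
end

section
/- In a non-unital infinitesimal bialgebra H (associative product ·, coassociative coproduct Δ with Δ(x·y) = x⊗y + x_{(1)}⊗x_{(2)}·y + x·y_{(1)}⊗y_{(2)}), the iterated coproduct satisfies for all k ≥ 1: Δᵏ(a·b) = Σ_{i=1}^{k} a_{(1)}⊗…⊗a_{(i)}⊗b_{(1)}⊗…⊗b_{(k+1−i)} + Σ_{i=1}^{k+1} a_{(1)}⊗…⊗a_{(i)}·b_{(1)}⊗…⊗b_{(k+2−i)}. -/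
open TensorProduct

variable (K : Type) [Field K] (H : Type) [AddCommGroup H] [Module K H]

variable (Δ : H →ₗ[K] TensorProduct K H H)

variable (μ : H →ₗ[K] H →ₗ[K] H)

/-! Induction on `k`: `Δᵏ⁺¹ = (Δ ⊗ Id)Δᵏ` only touches the first tensor factor. In every summand
except `a·b₍₁₎ ⊗ b₍₂₎ ⊗ …` that factor is `a₍₁₎`, and applying `Δ` to it just lengthens the
`a`-block. The first factor of the exceptional summand splits by the infinitesimal relation into
`a ⊗ b₍₁₎ ⊗ …`, `a₍₁₎ ⊗ a₍₂₎·b₍₁₎ ⊗ …` and `a·b₍₁₎ ⊗ b₍₂₎ ⊗ …`: exactly the summands at level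
`k + 1` that no lengthening produces. -/

def IsInfinitesimalCompatible : Prop :=
  ∀ x y : H, Δ (μ x y) = x ⊗ₜ[K] y + LinearMap.lTensor H (μ.flip y) (Δ x)
    + LinearMap.rTensor H (μ x) (Δ y)

lemma TP.induction_on {n : ℕ} {motive : TP K H (n + 1) → Prop} (z : TP K H (n + 1))
    (zero : motive 0) (tmul : ∀ (x : TP K H n) (y : H), motive ((x ⊗ₜ[K] y : TP K H (n + 1))))
    (add : ∀ x y : TP K H (n + 1), motive x → motive y → motive (x + y)) : motive z :=
  TensorProduct.induction_on z zero tmul add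

lemma tcast_tcast {m n p : ℕ} (h : m = n) (h' : n = p) (x : TP K H m) :
    tcast K H h' (tcast K H h x) = tcast K H (h.trans h') x := by
  subst h h'; rfl

lemma tcast_tmul {m n : ℕ} (h : m = n) (h' : m + 1 = n + 1) (x : TP K H m) (y : H) :
    ((tcast K H h x ⊗ₜ[K] y : TP K H (n + 1))) = tcast K H h' ((x ⊗ₜ[K] y : TP K H (m + 1))) := by
  subst h; rfl

lemma expDelta_tcast {m n : ℕ} (h : m = n) (x : TP K H m) :
    expDelta K H Δ n (tcast K H h x) = tcast K H (by rw [h]) (expDelta K H Δ m x) := by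
  subst h; rfl

lemma expDelta_succ_tmul (n : ℕ) (x : TP K H n) (y : H) :
    expDelta K H Δ (n + 1) ((x ⊗ₜ[K] y : TP K H (n + 1))) = expDelta K H Δ n x ⊗ₜ[K] y :=
  rfl

lemma splitE_symm_tmul_tmul (m n : ℕ) (x : TP K H m) (t : TP K H n) (y : H) :
    (splitE K H m (n + 1)).symm (x ⊗ₜ[K] ((t ⊗ₜ[K] y : TP K H (n + 1))))
      = (((splitE K H m n).symm (x ⊗ₜ[K] t)) ⊗ₜ[K] y : TP K H (m + n + 2)) :=
  rfl

lemma joinMul_tmul_tmul (p q : ℕ) (x : TP K H p) (t : TP K H q) (y : H) :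
    joinMul K H μ p (q + 1) (x ⊗ₜ[K] ((t ⊗ₜ[K] y : TP K H (q + 1))))
      = ((joinMul K H μ p q (x ⊗ₜ[K] t)) ⊗ₜ[K] y : TP K H (p + q + 1)) :=
  rfl

/- `id y : TP K H 0` pins the type of the factor, so that the tensor product is literally the
domain of `joinMul` (with plain `y : H` the instances would not match). -/
lemma joinMul_one_zero (w : TP K H 1) (y : H) :
    joinMul K H μ 1 0 (w ⊗ₜ[K] (id y : TP K H 0)) = LinearMap.lTensor H (μ.flip y) w := by
  induction w using TP.induction_on K H with
  | zero => rw [zero_tmul, map_zero]; exact (map_zero _).symm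
  | tmul a c => rfl
  | add w₁ w₂ h₁ h₂ => rw [add_tmul, map_add, h₁, h₂]; exact (map_add _ _ _).symm

lemma joinMul_zero_one (x : H) (w : TP K H 1) :
    joinMul K H μ 0 1 ((id x : TP K H 0) ⊗ₜ[K] w) = LinearMap.rTensor H (μ x) w := by
  induction w using TP.induction_on K H with
  | zero => rw [tmul_zero, map_zero]; exact (map_zero _).symm
  | tmul a c => rfl
  | add w₁ w₂ h₁ h₂ => rw [tmul_add, map_add, h₁, h₂]; exact (map_add _ _ _).symm

lemma expDelta_splitE_symm (m : ℕ) : ∀ (n : ℕ) (x : TP K H m) (t : TP K H n),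
    expDelta K H Δ (m + n + 1) ((splitE K H m n).symm (x ⊗ₜ[K] t))
      = tcast K H (by omega) ((splitE K H (m + 1) n).symm (expDelta K H Δ m x ⊗ₜ[K] t))
  | 0, _, _ => rfl
  | n + 1, x, t => by
    induction t using TP.induction_on K H with
    | zero => simp
    | tmul u y =>
      rw [splitE_symm_tmul_tmul, splitE_symm_tmul_tmul, expDelta_succ_tmul]
      erw [expDelta_splitE_symm m n]
      exact tcast_tmul K H _ _ _ _
    | add t₁ t₂ h₁ h₂ => simp only [tmul_add, map_add, h₁, h₂]

lemma expDelta_joinMul_succ (m : ℕ) : ∀ (n : ℕ) (x : TP K H (m + 1)) (t : TP K H n),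
    expDelta K H Δ (m + 1 + n) (joinMul K H μ (m + 1) n (x ⊗ₜ[K] t))
      = tcast K H (by omega) (joinMul K H μ (m + 2) n (expDelta K H Δ (m + 1) x ⊗ₜ[K] t))
  | 0, x, t => by
    induction x using TP.induction_on K H with
    | zero => simp
    | tmul u y => rfl
    | add x₁ x₂ h₁ h₂ => simp only [add_tmul, map_add, h₁, h₂]
  | n + 1, x, t => by
    induction t using TP.induction_on K H with
    | zero => simp
    | tmul u y =>
      rw [joinMul_tmul_tmul, joinMul_tmul_tmul]
      erw [expDelta_succ_tmul, expDelta_joinMul_succ m n]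
      exact tcast_tmul K H _ _ _ _
    | add t₁ t₂ h₁ h₂ => simp only [tmul_add, map_add, h₁, h₂]

lemma expDelta_joinMul_zero (hinf : IsInfinitesimalCompatible K H Δ μ) :
    ∀ (n : ℕ) (x : H) (t : TP K H n),
    expDelta K H Δ (0 + n) (joinMul K H μ 0 n ((id x : TP K H 0) ⊗ₜ[K] t))
      = tcast K H (by omega) ((splitE K H 0 n).symm ((id x : TP K H 0) ⊗ₜ[K] t))
        + tcast K H (by omega) (joinMul K H μ 1 n ((id (Δ x) : TP K H 1) ⊗ₜ[K] t))
        + tcast K H (by omega)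
            (joinMul K H μ 0 (n + 1) ((id x : TP K H 0) ⊗ₜ[K] expDelta K H Δ n t))
  | 0, x, t => by
    refine (hinf x t).trans ?_
    rw [← joinMul_one_zero K H μ (Δ x) t, ← joinMul_zero_one K H μ x (Δ t)]
    rfl
  | n + 1, x, t => by
    induction t using TP.induction_on K H with
    | zero => simp
    | tmul u y =>
      rw [joinMul_tmul_tmul]
      erw [expDelta_succ_tmul, expDelta_joinMul_zero hinf n]
      rw [add_tmul, add_tmul, splitE_symm_tmul_tmul, joinMul_tmul_tmul]
      erw [expDelta_succ_tmul]
      rw [joinMul_tmul_tmul]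
      refine congrArg₂ (· + ·) (congrArg₂ (· + ·) ?_ ?_) ?_ <;> exact tcast_tmul K H _ _ _ _
    | add t₁ t₂ h₁ h₂ =>
      simp only [tmul_add, map_add, h₁, h₂]
      abel

section Summands

variable (a b : H)

noncomputable def splitTensor (m n : ℕ) : TP K H (m + n + 1) :=
  (splitE K H m n).symm (DIter K H Δ m a ⊗ₜ[K] DIter K H Δ n b)

noncomputable def joinTensor (m n : ℕ) : TP K H (m + n) :=
  joinMul K H μ m n (DIter K H Δ m a ⊗ₜ[K] DIter K H Δ n b)

lemma splitTensor_eq_tcast (m : ℕ) {n n' : ℕ} (h : n = n') :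
    splitTensor K H Δ a b m n' = tcast K H (by rw [h]) (splitTensor K H Δ a b m n) := by
  subst h; rfl

lemma joinTensor_eq_tcast (m : ℕ) {n n' : ℕ} (h : n = n') :
    joinTensor K H Δ μ a b m n' = tcast K H (by rw [h]) (joinTensor K H Δ μ a b m n) := by
  subst h; rfl

lemma expDelta_splitTensor (m n : ℕ) :
    expDelta K H Δ (m + n + 1) (splitTensor K H Δ a b m n)
      = tcast K H (by omega) (splitTensor K H Δ a b (m + 1) n) := by
  rw [splitTensor, expDelta_splitE_symm]; rfl

lemma expDelta_joinTensor_succ (m n : ℕ) :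
    expDelta K H Δ (m + 1 + n) (joinTensor K H Δ μ a b (m + 1) n)
      = tcast K H (by omega) (joinTensor K H Δ μ a b (m + 2) n) := by
  rw [joinTensor, expDelta_joinMul_succ]; rfl

lemma expDelta_joinTensor_zero (hinf : IsInfinitesimalCompatible K H Δ μ) (n : ℕ) :
    expDelta K H Δ (0 + n) (joinTensor K H Δ μ a b 0 n)
      = tcast K H (by omega) (splitTensor K H Δ a b 0 n)
        + tcast K H (by omega) (joinTensor K H Δ μ a b 1 n)
        + tcast K H (by omega) (joinTensor K H Δ μ a b 0 (n + 1)) := by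
  rw [joinTensor]; erw [expDelta_joinMul_zero K H Δ μ hinf]; rfl

noncomputable def splitSummand (k j : ℕ) : TP K H k :=
  if h : j < k then tcast K H (by omega) (splitTensor K H Δ a b j (k - 1 - j)) else 0

noncomputable def joinSummand (k j : ℕ) : TP K H k :=
  if h : j ≤ k then tcast K H (by omega) (joinTensor K H Δ μ a b j (k - j)) else 0

lemma expDelta_splitSummand {k j : ℕ} (hj : j < k) :
    expDelta K H Δ k (splitSummand K H Δ a b k j) = splitSummand K H Δ a b (k + 1) (j + 1) := by
  rw [splitSummand, dif_pos hj, splitSummand, dif_pos (by omega), expDelta_tcast,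
    expDelta_splitTensor, tcast_tcast, splitTensor_eq_tcast K H Δ a b (j + 1)
      (show k - 1 - j = k + 1 - 1 - (j + 1) by omega), tcast_tcast]

lemma expDelta_joinSummand_succ {k j : ℕ} (hj : j < k) :
    expDelta K H Δ k (joinSummand K H Δ μ a b k (j + 1))
      = joinSummand K H Δ μ a b (k + 1) (j + 2) := by
  rw [joinSummand, dif_pos (Nat.succ_le_of_lt hj), joinSummand, dif_pos (by omega),
    expDelta_tcast, expDelta_joinTensor_succ, tcast_tcast, joinTensor_eq_tcast K H Δ μ a b (j + 2)
      (show k - (j + 1) = k + 1 - (j + 2) by omega), tcast_tcast]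

lemma expDelta_joinSummand_zero (hinf : IsInfinitesimalCompatible K H Δ μ) (k : ℕ) :
    expDelta K H Δ k (joinSummand K H Δ μ a b k 0)
      = splitSummand K H Δ a b (k + 1) 0 + joinSummand K H Δ μ a b (k + 1) 1
        + joinSummand K H Δ μ a b (k + 1) 0 := by
  rw [joinSummand, dif_pos k.zero_le, expDelta_tcast, expDelta_joinTensor_zero K H Δ μ a b hinf,
    splitSummand, dif_pos k.succ_pos, joinSummand, dif_pos (by omega),
    joinSummand, dif_pos (k + 1).zero_le,
    splitTensor_eq_tcast K H Δ a b 0 (show k - 0 = k + 1 - 1 - 0 by omega),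
    joinTensor_eq_tcast K H Δ μ a b 1 (show k - 0 = k + 1 - 1 by omega),
    joinTensor_eq_tcast K H Δ μ a b 0 (show k - 0 + 1 = k + 1 - 0 by omega)]
  simp only [tcast_tcast, map_add]

lemma DIter_succ_mul (hinf : IsInfinitesimalCompatible K H Δ μ) : ∀ k : ℕ,
    DIter K H Δ (k + 1) (μ a b)
      = ∑ j ∈ Finset.range (k + 1), splitSummand K H Δ a b (k + 1) j
        + ∑ j ∈ Finset.range (k + 2), joinSummand K H Δ μ a b (k + 1) j
  | 0 => by
    have h_split : splitSummand K H Δ a b 1 0 = a ⊗ₜ[K] b := by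
      rw [splitSummand, dif_pos one_pos]; rfl
    have h_join₀ : joinSummand K H Δ μ a b 1 0 = LinearMap.rTensor H (μ a) (Δ b) := by
      rw [joinSummand, dif_pos zero_le_one]
      exact joinMul_zero_one K H μ a (Δ b)
    have h_join₁ : joinSummand K H Δ μ a b 1 1 = LinearMap.lTensor H (μ.flip b) (Δ a) := by
      rw [joinSummand, dif_pos le_rfl]
      exact joinMul_one_zero K H μ (Δ a) b
    rw [Finset.sum_range_one, Finset.sum_range_succ, Finset.sum_range_one,
      h_split, h_join₀, h_join₁]
    refine (hinf a b).trans ?_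
    abel
  | k + 1 => by
    have h_split : ∑ j ∈ Finset.range (k + 1),
        expDelta K H Δ (k + 1) (splitSummand K H Δ a b (k + 1) j)
          = ∑ j ∈ Finset.range (k + 1), splitSummand K H Δ a b (k + 2) (j + 1) :=
      Finset.sum_congr rfl fun j hj => expDelta_splitSummand K H Δ a b (Finset.mem_range.mp hj)
    have h_join : ∑ j ∈ Finset.range (k + 2),
        expDelta K H Δ (k + 1) (joinSummand K H Δ μ a b (k + 1) j)
          = ∑ j ∈ Finset.range (k + 1), joinSummand K H Δ μ a b (k + 2) (j + 2)
            + (splitSummand K H Δ a b (k + 2) 0 + joinSummand K H Δ μ a b (k + 2) 1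
              + joinSummand K H Δ μ a b (k + 2) 0) := by
      rw [Finset.sum_range_succ', expDelta_joinSummand_zero K H Δ μ a b hinf]
      congr 1
      exact Finset.sum_congr rfl fun j hj =>
        expDelta_joinSummand_succ K H Δ μ a b (Finset.mem_range.mp hj)
    rw [show DIter K H Δ (k + 2) = expDelta K H Δ (k + 1) ∘ₗ DIter K H Δ (k + 1) from rfl,
      LinearMap.comp_apply, DIter_succ_mul hinf k, map_add, map_sum, map_sum, h_split, h_join,
      Finset.sum_range_succ' _ (k + 1), Finset.sum_range_succ' _ (k + 2),
      Finset.sum_range_succ' _ (k + 1)]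
    abel

end Summands

/-- In a non-unital infinitesimal bialgebra `H` (associative
product `μ`, coassociative coproduct `Δ` with
`Δ(x·y) = x⊗y + x₍₁₎⊗x₍₂₎·y + x·y₍₁₎⊗y₍₂₎`), the iterated coproduct
satisfies, for all `k ≥ 1`:
`Δᵏ(a·b) = Σ_{i=1}^{k} a₍₁₎⊗…⊗a₍ᵢ₎⊗b₍₁₎⊗…⊗b₍ₖ₊₁₋ᵢ₎
  + Σ_{i=1}^{k+1} a₍₁₎⊗…⊗(a₍ᵢ₎·b₍₁₎)⊗…⊗b₍ₖ₊₂₋ᵢ₎`.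
Here the `i`-th term of the first sum is `(splitE).symm (Δ^{i−1}a ⊗ Δ^{k−i}b)`
and the `i`-th term of the second sum joins `Δ^{i−1}a` and `Δ^{k+1−i}b` by
multiplying the adjacent factors. -/
theorem DIter_mul_infinitesimal
    (hinf : ∀ x y : H,
      Δ (μ x y) = x ⊗ₜ[K] y + LinearMap.lTensor H (μ.flip y) (Δ x)
        + LinearMap.rTensor H (μ x) (Δ y)) :
    ∀ k : ℕ, 1 ≤ k → ∀ a b : H,
      DIter K H Δ k (μ a b) =
        (∑ j ∈ (Finset.range k).attach,
          tcast K H (show j.1 + (k - 1 - j.1) + 1 = k by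
              have := Finset.mem_range.mp j.2; omega)
            ((splitE K H j.1 (k - 1 - j.1)).symm
              (TensorProduct.map (DIter K H Δ j.1) (DIter K H Δ (k - 1 - j.1))
                (a ⊗ₜ[K] b))))
        + (∑ j ∈ (Finset.range (k + 1)).attach,
          tcast K H (show j.1 + (k - j.1) = k by
              have := Finset.mem_range.mp j.2; omega)
            (joinMul K H μ j.1 (k - j.1)
              (TensorProduct.map (DIter K H Δ j.1) (DIter K H Δ (k - j.1))
                (a ⊗ₜ[K] b)))) := by
  intro k hk a b
  obtain ⟨k, rfl⟩ : ∃ k', k = k' + 1 := ⟨k - 1, by omega⟩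
  rw [DIter_succ_mul K H Δ μ a b hinf k, ← Finset.sum_attach (Finset.range (k + 1)),
    ← Finset.sum_attach (Finset.range (k + 2))]
  congr 1 <;> refine Finset.sum_congr rfl fun j _ => ?_
  · rw [splitSummand, dif_pos (Finset.mem_range.mp j.2)]; rfl
  · rw [joinSummand, dif_pos (Nat.lt_succ_iff.mp (Finset.mem_range.mp j.2))]; rfl
end
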